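/- arXiv:2406.05822 — 4 statements merged into one kernel-verified Lean document; each statement's English description precedes it below -/
import Mathlib

section
/- Let n, r be positive integers with r ≤ n, let U* ∈ ℝ^{n×r} have all row entries nonzero, set M* = U* U*ᵀ and Ω = {(i,j) ∈ [n]×[n] : M*_{ij} ≥ 0}, and define F(U) = (1/4)‖(U Uᵀ − M*)_Ω‖_F² for U ∈ ℝ^{n×r}. Suppose Assumptions 1 and 2 hold. Then U ∈ ℝ^{n×r} is a global minimizer of F over ℝ^{n×r} if and only if U Uᵀ = M*. -/
open Matrix Classical

noncomputable section

/-- Frobenius norm of a real matrix. -/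
def frobNorm {m k : Type*} [Fintype m] [Fintype k] (A : Matrix m k ℝ) : ℝ :=
  Real.sqrt (∑ i, ∑ j, (A i j) ^ 2)

/-- Frobenius (trace) inner product ⟨A, B⟩ = trace(Aᵀ B). -/
def frobInner {m k : Type*} [Fintype m] [Fintype k] (A B : Matrix m k ℝ) : ℝ :=
  ∑ i, ∑ j, A i j * B i j

/-- `(X)_Ω`: keep entries in `Ω`, zero out the rest. -/
def mask {m : Type*} (Ω : Set (m × m)) (X : Matrix m m ℝ) : Matrix m m ℝ :=
  Matrix.of fun i j => if (i, j) ∈ Ω then X i j else 0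

/-- ReLU sampling set: the nonnegative entries of `M`. -/
def reluSet {n : ℕ} (M : Matrix (Fin n) (Fin n) ℝ) : Set (Fin n × Fin n) :=
  {p | 0 ≤ M p.1 p.2}

/-- The objective `F(U) = (1/4) ‖(U Uᵀ − M)_Ω‖_F²`. -/
def objF {n r : ℕ} (Ω : Set (Fin n × Fin n)) (M : Matrix (Fin n) (Fin n) ℝ)
    (U : Matrix (Fin n) (Fin r) ℝ) : ℝ :=
  (1 / 4) * frobNorm (mask Ω (U * Uᵀ - M)) ^ 2

/-- Rows of `U` whose sign pattern is `s` (`s j = true` means positive entry). -/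
def signBlock {n r : ℕ} (U : Matrix (Fin n) (Fin r) ℝ) (s : Fin r → Bool) : Set (Fin n) :=
  {k | ∀ j, (0 < U k j ↔ s j = true)}

/-- A Gray-code ordering of the `2^r` sign patterns: a bijective enumeration in which
consecutive patterns differ in exactly one coordinate. -/
def IsGrayCode {r : ℕ} (s : Fin (2 ^ r) → Fin r → Bool) : Prop :=
  Function.Bijective s ∧
    ∀ i : ℕ, ∀ h : i + 1 < 2 ^ r,
      ∃! j : Fin r, s ⟨i, Nat.lt_of_succ_lt h⟩ j ≠ s ⟨i + 1, h⟩ j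

/-- Assumption 1: each orthant submatrix `U*_i` has full column rank `r`. -/
def Assumption1 {n r : ℕ} (U : Matrix (Fin n) (Fin r) ℝ)
    (s : Fin (2 ^ r) → Fin r → Bool) : Prop :=
  ∀ i : Fin (2 ^ r),
    Matrix.rank (Matrix.of fun (k : ↥(signBlock U (s i))) (j : Fin r) => U k.1 j) = r

/-- Assumption 2: for consecutive orthants, the observed rank-one matrices
`u*_k (u*_l)ᵀ` with `(k,l) ∈ Ω_{i+1,i}` span `ℝ^{r×r}`. -/
def Assumption2 {n r : ℕ} (U : Matrix (Fin n) (Fin r) ℝ)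
    (s : Fin (2 ^ r) → Fin r → Bool) : Prop :=
  ∀ i : ℕ, ∀ h : i + 1 < 2 ^ r,
    Submodule.span ℝ
      {A : Matrix (Fin r) (Fin r) ℝ |
        ∃ k l : Fin n, k ∈ signBlock U (s ⟨i + 1, h⟩) ∧
          l ∈ signBlock U (s ⟨i, Nat.lt_of_succ_lt h⟩) ∧
          0 ≤ ∑ j, U k j * U l j ∧
          A = Matrix.of fun a b => U k a * U l b} = ⊤

/-!
A global minimizer has objective value `0`, so `U Uᵀ` agrees with `M* = U* U*ᵀ` on `Ω`. Two rows
in the same sign orthant of `U*` have nonnegative inner product, so on every orthant block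
`U_i U_iᵀ = U*_i U*_iᵀ`; since `U*_i` has full column rank, `U_i = U*_i Q_i` for an orthogonal
`Q_i`. For consecutive orthants, the observed entries between the two blocks say that
`Q_{i+1} Q_iᵀ - 1` is Frobenius-orthogonal to the spanning family of Assumption 2, so
`Q_{i+1} = Q_i`. Along the Gray code all `Q_i` coincide, hence `U = U* Q` with `Q Qᵀ = 1`.
-/

namespace Matrix

variable {m ι : Type*} [Fintype ι] [DecidableEq ι]

theorem isUnit_of_rank_eq_card {K : Type*} [Field K] {A : Matrix ι ι K}
    (h : A.rank = Fintype.card ι) : IsUnit A := by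
  have hrange : LinearMap.range A.mulVecLin = ⊤ :=
    Submodule.eq_top_of_finrank_eq (by simpa [rank] using h)
  rw [← mulVec_injective_iff_isUnit]
  exact LinearMap.injective_iff_surjective.mpr (LinearMap.range_eq_top.mp hrange)

theorem exists_mul_transpose_eq_one_of_mul_transpose_eq [Fintype m] {A B : Matrix m ι ℝ}
    (hAB : A * Aᵀ = B * Bᵀ) (hB : IsUnit (Bᵀ * B)) :
    ∃ Q : Matrix ι ι ℝ, Q * Qᵀ = 1 ∧ A = B * Q := by
  set G := Bᵀ * B with hG
  have hdet : IsUnit G.det := (isUnit_iff_isUnit_det G).mp hB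
  have hGinvT : (G⁻¹)ᵀ = G⁻¹ := by
    rw [transpose_nonsing_inv, hG, transpose_mul, transpose_transpose]
  -- `B * Q` is the orthogonal projection of `A` onto the column space of `B`.
  set Q := G⁻¹ * Bᵀ * A
  have hQA : Q * Aᵀ = Bᵀ := by
    rw [Matrix.mul_assoc, Matrix.mul_assoc, hAB, ← Matrix.mul_assoc Bᵀ, ← hG, ← Matrix.mul_assoc,
      nonsing_inv_mul G hdet, Matrix.one_mul]
  have hAQ : A * Qᵀ = B := by
    rw [← transpose_transpose (A * Qᵀ), transpose_mul, transpose_transpose, hQA,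
      transpose_transpose]
  have hQQ : Q * Qᵀ = 1 := by
    rw [show Qᵀ = Aᵀ * B * G⁻¹ by simp [Q, transpose_mul, hGinvT, Matrix.mul_assoc],
      ← Matrix.mul_assoc, ← Matrix.mul_assoc, hQA, ← hG, mul_nonsing_inv G hdet]
  refine ⟨Q, hQQ, ?_⟩
  have hX : (A - B * Q) * (A - B * Q)ᵀ = 0 := by
    rw [transpose_sub, transpose_mul]
    simp only [Matrix.sub_mul, Matrix.mul_sub, ← Matrix.mul_assoc, hAQ]
    rw [Matrix.mul_assoc B Q, hQA, Matrix.mul_assoc B Q, hQQ, Matrix.mul_one, hAB]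
    abel
  rwa [← conjTranspose_eq_transpose_of_trivial, self_mul_conjTranspose_eq_zero, sub_eq_zero]
    at hX

end Matrix

theorem eq_zero_of_frobInner_eq_zero_of_span_eq_top {m k : Type*} [Fintype m] [Fintype k]
    [DecidableEq m] [DecidableEq k] {S : Set (Matrix m k ℝ)} (hS : Submodule.span ℝ S = ⊤)
    {C : Matrix m k ℝ} (hC : ∀ X ∈ S, frobInner X C = 0) : C = 0 := by
  have hspan : ∀ Y ∈ Submodule.span ℝ S, frobInner Y C = 0 := fun Y hY => by
    induction hY using Submodule.span_induction with
    | mem X hX => exact hC X hX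
    | zero => simp [frobInner]
    | add X Y _ _ hX hY =>
      simp only [frobInner, Matrix.add_apply, add_mul, Finset.sum_add_distrib] at hX hY ⊢
      rw [hX, hY, add_zero]
    | smul c X _ hX =>
      simp only [frobInner, Matrix.smul_apply, smul_eq_mul, mul_assoc, ← Finset.mul_sum] at hX ⊢
      rw [hX, mul_zero]
  ext a b
  simpa [frobInner, single_apply, ite_and] using
    hspan (single a b 1) (hS ▸ Submodule.mem_top)

theorem frobInner_vecMulVec_eq_mul_mul_transpose {m ι : Type*} [Fintype ι] (V : Matrix m ι ℝ)
    (C : Matrix ι ι ℝ) (a b : m) :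
    frobInner (vecMulVec (V a) (V b)) C = (V * C * Vᵀ) a b := by
  simp only [frobInner, vecMulVec_apply, mul_apply, transpose_apply, Finset.sum_mul]
  rw [Finset.sum_comm]
  exact Finset.sum_congr rfl fun _ _ => Finset.sum_congr rfl fun _ _ => by ring

theorem Fin.apply_eq_apply_of_apply_succ_eq {N : ℕ} {α : Type*} {f : Fin N → α}
    (h : ∀ (a : ℕ) (ha : a + 1 < N), f ⟨a + 1, ha⟩ = f ⟨a, Nat.lt_of_succ_lt ha⟩)
    (i j : Fin N) : f i = f j := by
  have key : ∀ (a : ℕ) (ha : a < N), f ⟨a, ha⟩ = f ⟨0, by omega⟩ := by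
    intro a
    induction a with
    | zero => intro _; rfl
    | succ a ih => intro ha; rw [h a ha, ih]
  exact (key i i.2).trans (key j j.2).symm

theorem frobNorm_eq_zero_iff {m k : Type*} [Fintype m] [Fintype k] {A : Matrix m k ℝ} :
    frobNorm A = 0 ↔ A = 0 := by
  have hrow : ∀ i, 0 ≤ ∑ j, A i j ^ 2 := fun i => Finset.sum_nonneg fun j _ => sq_nonneg _
  rw [frobNorm, Real.sqrt_eq_zero (Finset.sum_nonneg fun i _ => hrow i), ← Matrix.ext_iff]
  simp [Finset.sum_eq_zero_iff_of_nonneg, hrow, sq_nonneg]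

section LowRank

variable {n r : ℕ}

theorem objF_nonneg (Ω : Set (Fin n × Fin n)) (M : Matrix (Fin n) (Fin n) ℝ)
    (U : Matrix (Fin n) (Fin r) ℝ) : 0 ≤ objF Ω M U := by
  unfold objF
  positivity

theorem objF_eq_zero_iff {Ω : Set (Fin n × Fin n)} {M : Matrix (Fin n) (Fin n) ℝ}
    {U : Matrix (Fin n) (Fin r) ℝ} :
    objF Ω M U = 0 ↔ ∀ p ∈ Ω, (U * Uᵀ) p.1 p.2 = M p.1 p.2 := by
  simp [objF, frobNorm_eq_zero_iff, ← Matrix.ext_iff, mask, sub_eq_zero]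

theorem mul_transpose_apply_nonneg_of_mem_signBlock {U : Matrix (Fin n) (Fin r) ℝ}
    {σ : Fin r → Bool} {k l : Fin n} (hk : k ∈ signBlock U σ) (hl : l ∈ signBlock U σ) :
    0 ≤ (U * Uᵀ) k l := by
  simp only [mul_apply, transpose_apply]
  refine Finset.sum_nonneg fun j _ => ?_
  by_cases hj : σ j = true
  · exact (mul_pos ((hk j).2 hj) ((hl j).2 hj)).le
  · exact mul_nonneg_of_nonpos_of_nonpos (not_lt.1 fun h => hj ((hk j).1 h))
      (not_lt.1 fun h => hj ((hl j).1 h))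

theorem exists_orthogonal_factor_on_signBlock {U V : Matrix (Fin n) (Fin r) ℝ}
    {σ : Fin r → Bool}
    (hrank : (of fun (k : ↥(signBlock V σ)) (j : Fin r) => V k.1 j).rank = r)
    (hagree : ∀ p ∈ reluSet (V * Vᵀ), (U * Uᵀ) p.1 p.2 = (V * Vᵀ) p.1 p.2) :
    ∃ Q : Matrix (Fin r) (Fin r) ℝ, Q * Qᵀ = 1 ∧ ∀ k ∈ signBlock V σ, U k = (V * Q) k := by
  set B : Matrix ↥(signBlock V σ) (Fin r) ℝ := of fun k j => V k.1 j
  set A : Matrix ↥(signBlock V σ) (Fin r) ℝ := of fun k j => U k.1 j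
  have hAB : A * Aᵀ = B * Bᵀ := by
    ext k l
    exact hagree (k.1, l.1) (mul_transpose_apply_nonneg_of_mem_signBlock k.2 l.2)
  have hB : IsUnit (Bᵀ * B) :=
    isUnit_of_rank_eq_card (by rw [rank_transpose_mul_self, hrank, Fintype.card_fin])
  obtain ⟨Q, hQ, hAQ⟩ := exists_mul_transpose_eq_one_of_mul_transpose_eq hAB hB
  exact ⟨Q, hQ, fun k hk => funext fun j => congrFun (congrFun hAQ ⟨k, hk⟩) j⟩

theorem eq_of_span_vecMulVec_eq_top {U V : Matrix (Fin n) (Fin r) ℝ} {B₁ B₀ : Set (Fin n)}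
    {Q₁ Q₀ : Matrix (Fin r) (Fin r) ℝ}
    (hspan : Submodule.span ℝ {A : Matrix (Fin r) (Fin r) ℝ | ∃ k l : Fin n, k ∈ B₁ ∧ l ∈ B₀ ∧
      0 ≤ ∑ j, V k j * V l j ∧ A = of fun a b => V k a * V l b} = ⊤)
    (hagree : ∀ p ∈ reluSet (V * Vᵀ), (U * Uᵀ) p.1 p.2 = (V * Vᵀ) p.1 p.2)
    (hQ₀ : Q₀ * Q₀ᵀ = 1) (hU₁ : ∀ k ∈ B₁, U k = (V * Q₁) k)
    (hU₀ : ∀ l ∈ B₀, U l = (V * Q₀) l) : Q₁ = Q₀ := by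
  have hQ : Q₁ * Q₀ᵀ - 1 = 0 := by
    refine eq_zero_of_frobInner_eq_zero_of_span_eq_top hspan ?_
    rintro _ ⟨k, l, hk, hl, hkl, rfl⟩
    have hUkl : (U * Uᵀ) k l = (V * Q₁ * (V * Q₀)ᵀ) k l := by
      simp only [mul_apply, transpose_apply, hU₁ k hk, hU₀ l hl]
    rw [← vecMulVec, frobInner_vecMulVec_eq_mul_mul_transpose, Matrix.mul_sub, Matrix.sub_mul,
      Matrix.sub_apply, Matrix.mul_one, ← hagree (k, l) hkl, hUkl, transpose_mul]
    simp only [Matrix.mul_assoc, sub_self]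
  rw [sub_eq_zero] at hQ
  calc Q₁ = Q₁ * (Q₀ᵀ * Q₀) := by rw [mul_eq_one_comm.mp hQ₀, Matrix.mul_one]
    _ = Q₀ := by rw [← Matrix.mul_assoc, hQ, Matrix.one_mul]

theorem mul_transpose_eq_of_eq_on_reluSet {U V : Matrix (Fin n) (Fin r) ℝ}
    {s : Fin (2 ^ r) → Fin r → Bool} (hs : Function.Surjective s) (hA1 : Assumption1 V s)
    (hA2 : Assumption2 V s)
    (hagree : ∀ p ∈ reluSet (V * Vᵀ), (U * Uᵀ) p.1 p.2 = (V * Vᵀ) p.1 p.2) :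
    U * Uᵀ = V * Vᵀ := by
  choose Q hQ hUQ using fun i => exists_orthogonal_factor_on_signBlock (hA1 i) hagree
  have hQ_const : ∀ i j, Q i = Q j := Fin.apply_eq_apply_of_apply_succ_eq fun a ha =>
    eq_of_span_vecMulVec_eq_top (hA2 a ha) hagree (hQ _) (hUQ _) (hUQ _)
  set Q₀ := Q ⟨0, Nat.two_pow_pos r⟩
  have hU : U = V * Q₀ := funext fun k => by
    obtain ⟨i, hi⟩ := hs fun j => decide (0 < V k j)
    rw [hUQ i k (by simp [signBlock, hi]), hQ_const i]
  rw [hU, transpose_mul, Matrix.mul_assoc, ← Matrix.mul_assoc _ _ Vᵀ, hQ, Matrix.one_mul]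

end LowRank

theorem statement0_general {n r : ℕ}
    (Ustar : Matrix (Fin n) (Fin r) ℝ)
    (s : Fin (2 ^ r) → Fin r → Bool) (hs : IsGrayCode s)
    (hA1 : Assumption1 Ustar s) (hA2 : Assumption2 Ustar s)
    (U : Matrix (Fin n) (Fin r) ℝ) :
    (∀ W : Matrix (Fin n) (Fin r) ℝ,
        objF (reluSet (Ustar * Ustarᵀ)) (Ustar * Ustarᵀ) U ≤
          objF (reluSet (Ustar * Ustarᵀ)) (Ustar * Ustarᵀ) W) ↔
      U * Uᵀ = Ustar * Ustarᵀ := by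
  have hUstar : objF (reluSet (Ustar * Ustarᵀ)) (Ustar * Ustarᵀ) Ustar = 0 :=
    objF_eq_zero_iff.2 fun _ _ => rfl
  constructor
  · intro hmin
    have hU : objF (reluSet (Ustar * Ustarᵀ)) (Ustar * Ustarᵀ) U = 0 :=
      le_antisymm (hUstar ▸ hmin Ustar) (objF_nonneg _ _ _)
    exact mul_transpose_eq_of_eq_on_reluSet hs.1.2 hA1 hA2 (objF_eq_zero_iff.1 hU)
  · intro hUU W
    rw [objF_eq_zero_iff.2 fun p _ => by rw [hUU]]
    exact objF_nonneg _ _ _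

/-- under ReLU sampling and Assumptions 1 and 2, `U` is a global
minimizer of `F` iff `U Uᵀ = M*`. -/
theorem statement0 {n r : ℕ} (hn : 0 < n) (hr : 0 < r) (hrn : r ≤ n)
    (Ustar : Matrix (Fin n) (Fin r) ℝ) (hnz : ∀ k j, Ustar k j ≠ 0)
    (s : Fin (2 ^ r) → Fin r → Bool) (hs : IsGrayCode s)
    (hA1 : Assumption1 Ustar s) (hA2 : Assumption2 Ustar s)
    (U : Matrix (Fin n) (Fin r) ℝ) :
    (∀ W : Matrix (Fin n) (Fin r) ℝ,
        objF (reluSet (Ustar * Ustarᵀ)) (Ustar * Ustarᵀ) U ≤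
          objF (reluSet (Ustar * Ustarᵀ)) (Ustar * Ustarᵀ) W) ↔
      U * Uᵀ = Ustar * Ustarᵀ :=
  statement0_general Ustar s hs hA1 hA2 U
end
end

section
/- Let n, r be positive integers with r ≤ n, let U* ∈ ℝ^{n×r} have all row entries nonzero, set M* = U* U*ᵀ and Ω = {(i,j) ∈ [n]×[n] : M*_{ij} ≥ 0}. Suppose Assumptions 1 and 2 hold. If U ∈ ℝ^{n×r} satisfies (U Uᵀ)_Ω = (M*)_Ω (entrywise equality on Ω), then there exists an orthogonal matrix Q ∈ ℝ^{r×r} (QᵀQ = I_r) such that U = U* Q; in particular U Uᵀ = M*. -/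
/-!
On a sign block all inner products `⟨u*_k, u*_l⟩` are nonnegative, so the whole Gram matrix of
the block is observed; as the block has full column rank, `U` agrees there with `U* Q_i` for an
orthogonal `Q_i`. Between consecutive blocks the observed inner products give
`u*_kᵀ Q_{i+1} Q_iᵀ u*_l = u*_kᵀ u*_l` on pairs whose rank-one matrices `u*_k u*_lᵀ` span all
matrices, so `Q_{i+1} Q_iᵀ = 1`. Hence all the `Q_i` coincide, and every row lies in some block.
-/

open Matrix Classical

noncomputable section

namespace Matrix

variable {m n K : Type*} [Fintype n] [DecidableEq n]

lemma exists_mul_eq_one_of_rank_eq_card [Field K] [Fintype m] {V : Matrix m n K}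
    (hV : V.rank = Fintype.card n) : ∃ L : Matrix n m K, L * V = 1 := by
  have hker : LinearMap.ker V.mulVecLin = ⊥ := by
    have := V.mulVecLin.finrank_range_add_finrank_ker
    rw [Module.finrank_fintype_fun_eq_card, ← rank, hV, add_eq_left] at this
    exact Submodule.finrank_eq_zero.mp this
  obtain ⟨g, hg⟩ := V.mulVecLin.exists_leftInverse_of_injective hker
  refine ⟨LinearMap.toMatrix' g, ?_⟩
  rw [← LinearMap.toMatrix'_toLin' V, ← LinearMap.toMatrix'_comp]
  exact hg ▸ LinearMap.toMatrix'_id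

lemma exists_transpose_mul_eq_one_of_mul_transpose_eq [CommRing K] [Fintype m]
    {V W : Matrix m n K} {L : Matrix n m K} (hL : L * V = 1) (h : W * Wᵀ = V * Vᵀ) :
    ∃ Q : Matrix n n K, Qᵀ * Q = 1 ∧ W = V * Q := by
  -- `Q := L W`: substituting `W Wᵀ = V Vᵀ` gives `Q Qᵀ = (L V)(L V)ᵀ` and `W Qᵀ = V (L V)ᵀ`.
  have hQ : (L * W) * (L * W)ᵀ = 1 := by
    rw [transpose_mul, Matrix.mul_assoc, ← Matrix.mul_assoc W, h, ← Matrix.mul_assoc,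
      ← Matrix.mul_assoc, hL, Matrix.one_mul, ← transpose_mul, hL, transpose_one]
  have hWQ : W * (L * W)ᵀ = V := by
    rw [transpose_mul, ← Matrix.mul_assoc, h, Matrix.mul_assoc, ← transpose_mul, hL,
      transpose_one, Matrix.mul_one]
  refine ⟨L * W, mul_eq_one_comm.mp hQ, ?_⟩
  rw [← hWQ, Matrix.mul_assoc, mul_eq_one_comm.mp hQ, Matrix.mul_one]

lemma eq_of_dotProduct_mulVec_eq_of_span_eq_top [CommRing K] {A B : Matrix n n K} {S : Set (Matrix n n K)}
    (hS : Submodule.span K S = ⊤)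
    (h : ∀ C ∈ S, ∃ x y, C = vecMulVec x y ∧ x ⬝ᵥ A *ᵥ y = x ⬝ᵥ B *ᵥ y) : A = B := by
  let pairing (A : Matrix n n K) := traceLinearMap n K K ∘ₗ LinearMap.mulLeft K Aᵀ
  have hpairing : ∀ A x y, pairing A (vecMulVec x y) = x ⬝ᵥ A *ᵥ y := fun A x y => by
    simp [pairing, mul_vecMulVec, mulVec_transpose, dotProduct_mulVec]
  have hAB : pairing A = pairing B := LinearMap.ext_on hS fun C hC => by
    obtain ⟨x, y, rfl, hxy⟩ := h C hC
    rw [hpairing, hpairing, hxy]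
  rw [← transpose_inj, ext_iff_trace_mul_right]
  exact fun C => LinearMap.congr_fun hAB C

lemma exists_orthogonal_rows_eq_of_dotProduct_eq [Field K] [Finite m] {U V : Matrix m n K}
    {B : Set m} (hrank : (V.submatrix ((↑) : B → m) id).rank = Fintype.card n)
    (h : ∀ k ∈ B, ∀ l ∈ B, U k ⬝ᵥ U l = V k ⬝ᵥ V l) :
    ∃ Q : Matrix n n K, Qᵀ * Q = 1 ∧ ∀ k ∈ B, U k = (V * Q) k := by
  have := Fintype.ofFinite B
  obtain ⟨L, hL⟩ := exists_mul_eq_one_of_rank_eq_card hrank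
  obtain ⟨Q, hQ, hUQ⟩ := exists_transpose_mul_eq_one_of_mul_transpose_eq hL
    (W := U.submatrix (↑) id) (by ext k l; exact h k k.2 l l.2)
  exact ⟨Q, hQ, fun k hk => congrFun hUQ ⟨k, hk⟩⟩

lemma eq_of_dotProduct_vecMul_eq_of_span_eq_top [CommRing K] {Q₀ Q₁ : Matrix n n K}
    (hQ₀ : Q₀ᵀ * Q₀ = 1) {S : Set (Matrix n n K)} (hS : Submodule.span K S = ⊤)
    (h : ∀ C ∈ S, ∃ x y, C = vecMulVec x y ∧ (x ᵥ* Q₁) ⬝ᵥ (y ᵥ* Q₀) = x ⬝ᵥ y) :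
    Q₁ = Q₀ := by
  have hQ : Q₁ * Q₀ᵀ = 1 := eq_of_dotProduct_mulVec_eq_of_span_eq_top hS fun C hC => by
    obtain ⟨x, y, rfl, hxy⟩ := h C hC
    refine ⟨x, y, rfl, ?_⟩
    rw [one_mulVec, ← hxy, ← mulVec_mulVec, dotProduct_mulVec, mulVec_transpose]
  calc Q₁ = Q₁ * (Q₀ᵀ * Q₀) := by rw [hQ₀, Matrix.mul_one]
    _ = Q₀ := by rw [← Matrix.mul_assoc, hQ, Matrix.one_mul]

end Matrix

lemma Fin.apply_eq_apply_of_forall_succ {N : ℕ} {α : Type*} {f : Fin N → α}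
    (h : ∀ i (hi : i + 1 < N), f ⟨i + 1, hi⟩ = f ⟨i, Nat.lt_of_succ_lt hi⟩) (i j : Fin N) :
    f i = f j := by
  suffices key : ∀ i (hi : i < N), f ⟨i, hi⟩ = f ⟨0, Nat.zero_lt_of_lt hi⟩ from
    (key i i.2).trans (key j j.2).symm
  intro i
  induction i with
  | zero => exact fun _ => rfl
  | succ i ih => exact fun hi => (h i hi).trans (ih _)

lemma apply_eq_of_mask_eq {m : Type*} {Ω : Set (m × m)} {X Y : Matrix m m ℝ}
    (h : mask Ω X = mask Ω Y) {i j : m} (hij : (i, j) ∈ Ω) : X i j = Y i j := by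
  simpa [mask, hij] using congrFun (congrFun h i) j

lemma dotProduct_nonneg_of_mem_signBlock {n r : ℕ} {U : Matrix (Fin n) (Fin r) ℝ}
    {s : Fin r → Bool} {k l : Fin n} (hk : k ∈ signBlock U s) (hl : l ∈ signBlock U s) :
    0 ≤ U k ⬝ᵥ U l := by
  refine Finset.sum_nonneg fun j _ => ?_
  cases hs : s j
  · exact mul_nonneg_of_nonpos_of_nonpos (not_lt.mp fun h => by simpa [hs] using (hk j).mp h)
      (not_lt.mp fun h => by simpa [hs] using (hl j).mp h)
  · exact mul_nonneg ((hk j).mpr hs).le ((hl j).mpr hs).le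

lemma mem_signBlock_self {n r : ℕ} (U : Matrix (Fin n) (Fin r) ℝ) (k : Fin n) :
    k ∈ signBlock U (fun j => decide (0 < U k j)) := fun j => by simp

theorem statement1_general {n r : ℕ}
    (Ustar : Matrix (Fin n) (Fin r) ℝ)
    (s : Fin (2 ^ r) → Fin r → Bool) (hs : IsGrayCode s)
    (hA1 : Assumption1 Ustar s) (hA2 : Assumption2 Ustar s)
    (U : Matrix (Fin n) (Fin r) ℝ)
    (hfit : mask (reluSet (Ustar * Ustarᵀ)) (U * Uᵀ) =
      mask (reluSet (Ustar * Ustarᵀ)) (Ustar * Ustarᵀ)) :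
    ∃ Q : Matrix (Fin r) (Fin r) ℝ, Qᵀ * Q = 1 ∧ U = Ustar * Q ∧
      U * Uᵀ = Ustar * Ustarᵀ := by
  have hobs : ∀ k l, 0 ≤ Ustar k ⬝ᵥ Ustar l → U k ⬝ᵥ U l = Ustar k ⬝ᵥ Ustar l :=
    fun _ _ => apply_eq_of_mask_eq hfit
  have hblock : ∀ i, ∃ Q : Matrix (Fin r) (Fin r) ℝ, Qᵀ * Q = 1 ∧
      ∀ k ∈ signBlock Ustar (s i), U k = (Ustar * Q) k := fun i =>
    exists_orthogonal_rows_eq_of_dotProduct_eq ((hA1 i).trans (Fintype.card_fin r).symm)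
      fun k hk l hl => hobs k l (dotProduct_nonneg_of_mem_signBlock hk hl)
  choose Q hQ hUQ using hblock
  have hQ_const : ∀ i j, Q i = Q j := Fin.apply_eq_apply_of_forall_succ fun i hi =>
    eq_of_dotProduct_vecMul_eq_of_span_eq_top (hQ _) (hA2 i hi) <| by
      rintro _ ⟨k, l, hk, hl, hkl, rfl⟩
      refine ⟨Ustar k, Ustar l, rfl, ?_⟩
      rw [← mul_apply_eq_vecMul, ← mul_apply_eq_vecMul, ← hUQ _ k hk, ← hUQ _ l hl]
      exact hobs k l hkl
  obtain ⟨i₀⟩ : Nonempty (Fin (2 ^ r)) := ⟨⟨0, Nat.two_pow_pos r⟩⟩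
  have hU : U = Ustar * Q i₀ := funext fun k => by
    obtain ⟨i, hi⟩ := hs.1.2 fun j => decide (0 < Ustar k j)
    rw [hUQ i k (hi ▸ mem_signBlock_self Ustar k), hQ_const i i₀]
  refine ⟨Q i₀, hQ i₀, hU, ?_⟩
  rw [hU, transpose_mul, Matrix.mul_assoc, ← Matrix.mul_assoc (Q i₀),
    mul_eq_one_comm.mp (hQ i₀), Matrix.one_mul]

/-- under ReLU sampling and Assumptions 1 and 2, any `U` matching the
observed entries equals `U* Q` for an orthogonal `Q`; in particular `U Uᵀ = M*`. -/
theorem statement1 {n r : ℕ} (hn : 0 < n) (hr : 0 < r) (hrn : r ≤ n)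
    (Ustar : Matrix (Fin n) (Fin r) ℝ) (hnz : ∀ k j, Ustar k j ≠ 0)
    (s : Fin (2 ^ r) → Fin r → Bool) (hs : IsGrayCode s)
    (hA1 : Assumption1 Ustar s) (hA2 : Assumption2 Ustar s)
    (U : Matrix (Fin n) (Fin r) ℝ)
    (hfit : mask (reluSet (Ustar * Ustarᵀ)) (U * Uᵀ) =
      mask (reluSet (Ustar * Ustarᵀ)) (Ustar * Ustarᵀ)) :
    ∃ Q : Matrix (Fin r) (Fin r) ℝ, Qᵀ * Q = 1 ∧ U = Ustar * Q ∧
      U * Uᵀ = Ustar * Ustarᵀ :=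
  statement1_general Ustar s hs hA1 hA2 U hfit
end
end

section
/- Let U, U* ∈ ℝ^{n×r} and let Uᵀ U* = P Σ Qᵀ be a singular value decomposition, where P, Q ∈ ℝ^{r×r} are orthogonal and Σ ∈ ℝ^{r×r} is diagonal with nonnegative entries. Define the aligned matrix Ũ = U P Qᵀ and D = Ũ − U*. Then U*ᵀ D = Dᵀ U*, i.e., D lies in the horizontal space {E ∈ ℝ^{n×r} : U*ᵀ E = Eᵀ U*}; equivalently, ⟨U* V, Ũ − U*⟩ = 0 for every skew-symmetric V ∈ ℝ^{r×r}. -/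
/-!
Since `U*ᵀ U = (Uᵀ U*)ᵀ = Q S Pᵀ` and `Pᵀ P = 1`, the alignment gives `U*ᵀ Ũ = Q S Qᵀ`, which is
symmetric. Subtracting the symmetric `U*ᵀ U*` keeps `U*ᵀ D` symmetric, and a symmetric matrix is
trace-orthogonal to every skew-symmetric one, which gives `⟨U* V, D⟩ = tr (Vᵀ U*ᵀ D) = 0`.
-/

open Matrix Classical

noncomputable section

lemma frobInner_eq_trace {m k : Type*} [Fintype m] [Fintype k] (A B : Matrix m k ℝ) :
    frobInner A B = (Aᵀ * B).trace := by
  simp only [frobInner, trace, diag, mul_apply, transpose_apply]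
  exact Finset.sum_comm

namespace Matrix

variable {m k R : Type*}

lemma trace_transpose_mul_eq_zero_of_isSymm [Fintype k] [CommRing R] [IsAddTorsionFree R]
    {V M : Matrix k k R} (hV : V + Vᵀ = 0) (hM : M.IsSymm) : (Vᵀ * M).trace = 0 := by
  have hVt : Vᵀ = -V := eq_neg_of_add_eq_zero_right hV
  refine self_eq_neg.mp ?_
  calc (Vᵀ * M).trace = (V * M).trace := by rw [← hM.eq, trace_transpose_mul, hM.eq]
    _ = -(Vᵀ * M).trace := by rw [hVt, Matrix.neg_mul, trace_neg, neg_neg]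

lemma IsSymm.transpose_mul_sub_self [Fintype m] [CommRing R] {A B : Matrix m k R}
    (h : (Aᵀ * B).IsSymm) : (Aᵀ * (B - A)).IsSymm := by
  rw [Matrix.mul_sub]
  exact h.sub (by rw [IsSymm, transpose_mul, transpose_transpose])

lemma isSymm_transpose_mul_mul_mul_transpose [Fintype m] [Fintype k] [DecidableEq k] [CommRing R]
    {U Ustar : Matrix m k R} {P Q S : Matrix k k R} (hP : Pᵀ * P = 1) (hS : S.IsSymm)
    (hSVD : Uᵀ * Ustar = P * S * Qᵀ) :
    (Ustarᵀ * (U * P * Qᵀ)).IsSymm := by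
  have hUstarU : Ustarᵀ * U = Q * S * Pᵀ := by
    rw [← transpose_transpose U, ← transpose_mul, hSVD]
    simp only [transpose_mul, transpose_transpose, hS.eq, Matrix.mul_assoc]
  have hQSQ : Ustarᵀ * (U * P * Qᵀ) = Q * S * Qᵀ := by
    simp only [← Matrix.mul_assoc, hUstarU]
    rw [Matrix.mul_assoc (Q * S), hP, Matrix.mul_one]
  rw [hQSQ, IsSymm, transpose_mul, transpose_mul, transpose_transpose, hS.eq, Matrix.mul_assoc]

end Matrix

theorem statement8_general {n r : ℕ} (U Ustar : Matrix (Fin n) (Fin r) ℝ)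
    (P Q S : Matrix (Fin r) (Fin r) ℝ)
    (hP : Pᵀ * P = 1)
    (hSdiag : S.IsDiag)
    (hSVD : Uᵀ * Ustar = P * S * Qᵀ) :
    Ustarᵀ * (U * P * Qᵀ - Ustar) = (U * P * Qᵀ - Ustar)ᵀ * Ustar ∧
      ∀ V : Matrix (Fin r) (Fin r) ℝ, V + Vᵀ = 0 →
        frobInner (Ustar * V) (U * P * Qᵀ - Ustar) = 0 := by
  have hD : (Ustarᵀ * (U * P * Qᵀ - Ustar)).IsSymm :=
    (isSymm_transpose_mul_mul_mul_transpose hP hSdiag.isSymm hSVD).transpose_mul_sub_self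
  refine ⟨by simpa only [IsSymm, transpose_mul, transpose_transpose] using hD.symm, ?_⟩
  intro V hV
  rw [frobInner_eq_trace, transpose_mul, Matrix.mul_assoc]
  exact trace_transpose_mul_eq_zero_of_isSymm hV hD

/-- if `Uᵀ U* = P S Qᵀ` is an SVD (P, Q orthogonal, S diagonal with
nonnegative entries), then the aligned difference `D = U P Qᵀ − U*` lies in the
horizontal space at `U*`: `U*ᵀ D = Dᵀ U*`; equivalently `⟨U* V, D⟩ = 0` for every
skew-symmetric `V`. -/
theorem statement8 {n r : ℕ} (U Ustar : Matrix (Fin n) (Fin r) ℝ)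
    (P Q S : Matrix (Fin r) (Fin r) ℝ)
    (hP : Pᵀ * P = 1) (hQ : Qᵀ * Q = 1)
    (hSdiag : S.IsDiag) (hSnn : ∀ i, 0 ≤ S i i)
    (hSVD : Uᵀ * Ustar = P * S * Qᵀ) :
    Ustarᵀ * (U * P * Qᵀ - Ustar) = (U * P * Qᵀ - Ustar)ᵀ * Ustar ∧
      ∀ V : Matrix (Fin r) (Fin r) ℝ, V + Vᵀ = 0 →
        frobInner (Ustar * V) (U * P * Qᵀ - Ustar) = 0 :=
  statement8_general U Ustar P Q S hP hSdiag hSVD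
end
end

section
/- Let n, r be positive integers with r ≤ n, let U* ∈ ℝ^{n×r}, Δ ∈ ℝ^{n×n}, M = U* U*ᵀ + Δ, Ω = {(i,j) ∈ [n]×[n] : M_{ij} ≥ 0}, and F(U) = (1/4)‖(U Uᵀ − M)_Ω‖_F². Suppose Assumption 3 holds with K index sets and constant λ > 0. Let U ∈ ℝ^{n×r} be any global minimizer of F and define c₀ = √(8K) · ( √λ + 2‖Δ‖_F^{1/2} + ‖U*‖ + K‖U*‖·(3 + (2/λ)‖Δ‖_F) ). Then there exists an orthogonal matrix Q ∈ ℝ^{r×r} (QᵀQ = I_r) such that ‖U − U* Q‖_F ≤ (c₀/λ) · ‖Δ‖_F. -/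
open Matrix Classical

noncomputable section

/-- Spectral norm (largest singular value): the supremum of `‖A x‖` over unit vectors. -/
def specNorm {m k : Type*} [Fintype m] [Fintype k] (A : Matrix m k ℝ) : ℝ :=
  sSup {c : ℝ | ∃ x : k → ℝ, ∑ j, x j ^ 2 = 1 ∧ c = Real.sqrt (∑ i, (A.mulVec x i) ^ 2)}

/-- Assumption 3: index sets `I_1, …, I_K ⊆ [n]` with
(a) they cover `[n]`; (b) each diagonal block `I_k × I_k` is observed;
(c) `U*_kᵀ U*_k ⪰ λ I_r` for each `k` (stated as a quadratic-form lower bound);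
(d) any two index sets are connected by a path of fully observed off-diagonal blocks. -/
def Assumption3 {n r : ℕ} (U : Matrix (Fin n) (Fin r) ℝ) (Ω : Set (Fin n × Fin n))
    (K : ℕ) (I : Fin K → Finset (Fin n)) (lam : ℝ) : Prop :=
  (∀ i : Fin n, ∃ k : Fin K, i ∈ I k) ∧
    (∀ k : Fin K, ∀ a ∈ I k, ∀ b ∈ I k, (a, b) ∈ Ω) ∧
    (∀ k : Fin K, ∀ x : Fin r → ℝ,
      lam * ∑ j, x j ^ 2 ≤ ∑ i ∈ I k, (∑ j, U i j * x j) ^ 2) ∧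
    (∀ k l : Fin K, k ≠ l → ∃ s : ℕ, ∃ p : Fin (s + 1) → Fin K,
      p 0 = k ∧ p (Fin.last s) = l ∧
        ∀ j : Fin s, ∀ a ∈ I (Fin.castSucc j |> p), ∀ b ∈ I (p j.succ), (a, b) ∈ Ω)

/-- The constant `c₀ = √(8K) (√λ + 2‖Δ‖_F^{1/2} + ‖U*‖ + K‖U*‖(3 + (2/λ)‖Δ‖_F))`. -/
def cZero {n r : ℕ} (K : ℕ) (lam : ℝ) (Ustar : Matrix (Fin n) (Fin r) ℝ)
    (Δ : Matrix (Fin n) (Fin n) ℝ) : ℝ :=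
  Real.sqrt (8 * K) *
    (Real.sqrt lam + 2 * Real.sqrt (frobNorm Δ) + specNorm Ustar +
      K * specNorm Ustar * (3 + (2 / lam) * frobNorm Δ))

/-!
Optimality of `U`, tested against the competitor `U*`, gives `‖(UUᵀ - M)_Ω‖_F ≤ ‖Δ‖_F`, so every
fully observed block `I_a × I_b` of `UUᵀ - U*U*ᵀ` has norm at most `ε = 2‖Δ‖_F`. Since
`U*_aᵀU*_a ⪰ λ`, the least-squares factors `R_a = (U*_aᵀU*_a)⁻¹U*_aᵀU_a` satisfy
`‖R_a R_bᵀ - 1‖ ≤ ε/λ` for observed pairs. Hence each `R_a` is `ε/λ`-close to an orthogonal `Q_a`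
(its polar factor), `U_a ≈ U*_a Q_a` up to `√(2/λ) ε + ‖U*‖ ε/λ`, and blocks that see each other
have `‖Q_a - Q_b‖ ≤ 3ε/λ + (ε/λ)²`. By connectivity a single `Q_{a₀}` serves every block, at the
cost of a factor `K` (shortest paths have length `< K`), and as the blocks cover all rows, summing
their squared errors costs a further `√K`.
-/

open Filter Topology

attribute [local instance] Matrix.frobeniusNormedAddCommGroup Matrix.frobeniusNormedSpace

namespace SimpleGraph

variable {V E : Type*} [SeminormedAddCommGroup E] {G : SimpleGraph V} {f : V → E} {α : ℝ}

lemma Walk.norm_sub_le_length_mul (hf : ∀ a b, G.Adj a b → ‖f a - f b‖ ≤ α) {a b : V}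
    (w : G.Walk a b) : ‖f a - f b‖ ≤ w.length * α := by
  induction w with
  | nil => simp
  | cons h p ih =>
    rw [length_cons, Nat.cast_succ, add_one_mul, add_comm]
    exact (norm_sub_le_norm_sub_add_norm_sub _ _ _).trans (add_le_add (hf _ _ h) ih)

lemma Reachable.norm_sub_le_card_mul [Fintype V] (hα : 0 ≤ α)
    (hf : ∀ a b, G.Adj a b → ‖f a - f b‖ ≤ α) {a b : V} (h : G.Reachable a b) :
    ‖f a - f b‖ ≤ Fintype.card V * α := by
  classical
  obtain ⟨w⟩ := h
  exact (w.bypass.norm_sub_le_length_mul hf).trans <|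
    mul_le_mul_of_nonneg_right (by exact_mod_cast w.bypass_isPath.length_lt.le) hα

lemma reachable_fromRel_of_chain {r : V → V → Prop} {s : ℕ} (p : Fin (s + 1) → V)
    (hp : ∀ j : Fin s, r (p j.castSucc) (p j.succ)) :
    (fromRel r).Reachable (p 0) (p (Fin.last s)) := by
  induction s with
  | zero => rfl
  | succ s ih =>
    refine (ih (fun j => p j.castSucc) fun j => hp j.castSucc).trans ?_
    rw [← Fin.succ_last]
    by_cases heq : p (Fin.last s).castSucc = p (Fin.last s).succ
    · rw [heq]
    · exact Adj.reachable ((fromRel_adj _ _ _).mpr ⟨heq, Or.inl (hp (Fin.last s))⟩)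

end SimpleGraph

namespace ReluSampling

open scoped MatrixOrder

lemma submatrix_mul_transpose {m k m' k' : Type*} [Fintype k] (X Y : Matrix m k ℝ) (f : m' → m)
    (g : k' → m) : (X * Yᵀ).submatrix f g = X.submatrix f id * (Y.submatrix g id)ᵀ := by
  rw [transpose_submatrix, ← submatrix_mul _ _ _ _ _ Function.bijective_id]

lemma submatrix_mul_id {m k m' : Type*} [Fintype k] (X : Matrix m k ℝ) (W : Matrix k k ℝ)
    (f : m' → m) : (X * W).submatrix f id = X.submatrix f id * W := by
  rw [submatrix_mul X W _ id id Function.bijective_id, submatrix_id_id]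

lemma norm_submatrix_comm {m m' k' : Type*} [Fintype m'] [Fintype k'] {X : Matrix m m ℝ}
    (hX : Xᵀ = X) (f : m' → m) (g : k' → m) : ‖X.submatrix f g‖ = ‖X.submatrix g f‖ := by
  rw [← frobenius_norm_transpose, transpose_submatrix, hX]

variable {m m' k k' l : Type*} [Fintype m] [Fintype m'] [Fintype k] [Fintype k'] [Fintype l]

section Frobenius

lemma frobNorm_eq_norm (A : Matrix m k ℝ) : frobNorm A = ‖A‖ := by
  rw [frobNorm, frobenius_norm_def, Real.sqrt_eq_rpow]
  simp [Real.norm_eq_abs, sq_abs]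

lemma sq_norm_eq_sum (A : Matrix m k ℝ) : ‖A‖ ^ 2 = ∑ i, ∑ j, A i j ^ 2 := by
  rw [← frobNorm_eq_norm, frobNorm, Real.sq_sqrt (by positivity)]

lemma sq_norm_eq_trace (A : Matrix m k ℝ) : ‖A‖ ^ 2 = (Aᵀ * A).trace := by
  rw [sq_norm_eq_sum, trace, Finset.sum_comm]
  simp [mul_apply, sq]

lemma abs_trace_transpose_mul_le (A B : Matrix m k ℝ) : |(Aᵀ * B).trace| ≤ ‖A‖ * ‖B‖ := by
  let e : Matrix m k ℝ → PiLp 2 fun _ : m => EuclideanSpace ℝ k :=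
    fun A => WithLp.toLp 2 fun i => WithLp.toLp 2 (A i)
  have h : (Aᵀ * B).trace = inner ℝ (e A) (e B) := by
    simp [e, PiLp.inner_apply, trace, mul_apply, Finset.sum_comm (γ := m), mul_comm]
  exact h ▸ abs_real_inner_le_norm (e A) (e B)

lemma sum_comp_le_sum_of_injective {ι ι' : Type*} [Fintype ι] [Fintype ι'] {e : ι' → ι}
    (he : e.Injective) {h : ι → ℝ} (h0 : ∀ i, 0 ≤ h i) : ∑ i', h (e i') ≤ ∑ i, h i := by
  rw [← Finset.sum_image fun a _ b _ hab => he hab]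
  exact Finset.sum_le_sum_of_subset_of_nonneg (Finset.subset_univ _) fun i _ _ => h0 i

lemma norm_submatrix_le (X : Matrix m k ℝ) {f : m' → m} {g : k' → k}
    (hf : f.Injective) (hg : g.Injective) : ‖X.submatrix f g‖ ≤ ‖X‖ := by
  refine (sq_le_sq₀ (norm_nonneg _) (norm_nonneg _)).mp ?_
  simp only [sq_norm_eq_sum, submatrix_apply]
  calc ∑ i', ∑ j', X (f i') (g j') ^ 2 ≤ ∑ i', ∑ j, X (f i') j ^ 2 :=
        Finset.sum_le_sum fun i' _ => sum_comp_le_sum_of_injective hg fun _ => sq_nonneg _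
    _ ≤ ∑ i, ∑ j, X i j ^ 2 :=
        sum_comp_le_sum_of_injective (h := fun i => ∑ j, X i j ^ 2) hf
          fun _ => Finset.sum_nonneg fun _ _ => sq_nonneg _

lemma norm_mul_of_transpose_mul_self_eq_one [DecidableEq k] {Q : Matrix k k ℝ} (hQ : Qᵀ * Q = 1)
    (X : Matrix m k ℝ) : ‖X * Q‖ = ‖X‖ := by
  have hQ' : Q * Qᵀ = 1 := mul_eq_one_comm.mp hQ
  refine (sq_eq_sq₀ (norm_nonneg _) (norm_nonneg _)).mp ?_
  rw [sq_norm_eq_trace, sq_norm_eq_trace, transpose_mul, Matrix.mul_assoc, trace_mul_comm,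
    Matrix.mul_assoc, Matrix.mul_assoc, hQ', Matrix.mul_one]

lemma norm_transpose_mul_self (X : Matrix m k ℝ) : ‖Xᵀ * X‖ = ‖X * Xᵀ‖ := by
  refine (sq_eq_sq₀ (norm_nonneg _) (norm_nonneg _)).mp ?_
  rw [sq_norm_eq_trace, sq_norm_eq_trace]
  simp only [transpose_mul, transpose_transpose, Matrix.mul_assoc]
  rw [trace_mul_comm]
  simp only [Matrix.mul_assoc]

lemma norm_transpose_mul_self_sub_one [DecidableEq k] (R : Matrix k k ℝ) :
    ‖Rᵀ * R - 1‖ = ‖R * Rᵀ - 1‖ := by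
  refine (sq_eq_sq₀ (norm_nonneg _) (norm_nonneg _)).mp ?_
  have h := congrArg (· ^ 2) (norm_transpose_mul_self R)
  simp only [sq_norm_eq_trace] at h ⊢
  simp only [transpose_sub, transpose_mul, transpose_transpose, transpose_one, Matrix.sub_mul,
    Matrix.mul_sub, Matrix.one_mul, Matrix.mul_one, trace_sub] at h ⊢
  rw [h, trace_mul_comm Rᵀ R]

lemma abs_sq_norm_mul_transpose_sub_sq_norm_le [DecidableEq k] (Y : Matrix l k ℝ)
    (R : Matrix k k ℝ) : |‖Y * Rᵀ‖ ^ 2 - ‖Y‖ ^ 2| ≤ ‖Y * Yᵀ‖ * ‖R * Rᵀ - 1‖ := by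
  have h : ‖Y * Rᵀ‖ ^ 2 - ‖Y‖ ^ 2 = ((Yᵀ * Y)ᵀ * (Rᵀ * R - 1)).trace := by
    rw [sq_norm_eq_trace, sq_norm_eq_trace, transpose_mul, transpose_transpose,
      transpose_mul, Matrix.mul_sub, Matrix.mul_one, trace_sub, Matrix.mul_assoc,
      trace_mul_comm, Matrix.mul_assoc, Matrix.mul_assoc, transpose_transpose, Matrix.mul_assoc]
  rw [h, ← norm_transpose_mul_self, ← norm_transpose_mul_self_sub_one]
  exact abs_trace_transpose_mul_le _ _

lemma transpose_eq_of_isStarProjection {P : Matrix m m ℝ} (hP : IsStarProjection P) : Pᵀ = P := by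
  simpa [star_eq_conjTranspose, conjTranspose_eq_transpose_of_trivial] using
    hP.isSelfAdjoint.star_eq

lemma norm_proj_mul_le [DecidableEq m] {P : Matrix m m ℝ} (hP : IsStarProjection P)
    (X : Matrix m l ℝ) : ‖P * X‖ ≤ ‖X‖ := by
  have h : ‖X‖ ^ 2 - ‖P * X‖ ^ 2 = ‖(1 - P) * X‖ ^ 2 := by
    simp only [sq_norm_eq_trace, transpose_mul, transpose_sub, transpose_eq_of_isStarProjection hP,
      Matrix.mul_assoc, Matrix.sub_mul, Matrix.mul_sub, Matrix.one_mul,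
      ← Matrix.mul_assoc P P, hP.isIdempotentElem.eq, trace_sub]
    ring
  exact (sq_le_sq₀ (norm_nonneg _) (norm_nonneg _)).mp (by nlinarith [sq_nonneg ‖(1 - P) * X‖])

lemma norm_mul_proj_le [DecidableEq m] {P : Matrix m m ℝ} (hP : IsStarProjection P)
    (X : Matrix l m ℝ) : ‖X * P‖ ≤ ‖X‖ := by
  rw [← frobenius_norm_transpose, transpose_mul, transpose_eq_of_isStarProjection hP,
    ← frobenius_norm_transpose X]
  exact norm_proj_mul_le hP Xᵀ

end Frobenius

section Gram

lemma trace_transpose_mul_mul_nonneg {N : Matrix k k ℝ} (hN : N.PosSemidef) (W : Matrix k l ℝ) :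
    0 ≤ (Wᵀ * N * W).trace := by
  simpa [conjTranspose_eq_transpose_of_trivial] using (hN.conjTranspose_mul_mul_same W).trace_nonneg

variable [DecidableEq k] {B : Matrix m k ℝ} {c : ℝ}

lemma sq_norm_mul_sub_smul_sq_norm (B : Matrix m k ℝ) (c : ℝ) (W : Matrix k l ℝ) :
    ‖B * W‖ ^ 2 - c * ‖W‖ ^ 2 = (Wᵀ * (Bᵀ * B - c • 1) * W).trace := by
  simp only [sq_norm_eq_trace, transpose_mul, Matrix.mul_sub, Matrix.sub_mul, trace_sub,
    Matrix.mul_smul, Matrix.smul_mul, Matrix.mul_one, trace_smul, smul_eq_mul, Matrix.mul_assoc]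

lemma le_sq_norm_mul_of_smul_one_le (h : c • 1 ≤ Bᵀ * B) (W : Matrix k l ℝ) :
    c * ‖W‖ ^ 2 ≤ ‖B * W‖ ^ 2 :=
  sub_nonneg.mp <| (sq_norm_mul_sub_smul_sq_norm B c W).symm ▸
    trace_transpose_mul_mul_nonneg (Matrix.le_iff.mp h) W

lemma norm_mul_le_of_le_smul_one (hc : 0 ≤ c) (h : Bᵀ * B ≤ c ^ 2 • 1) (W : Matrix k l ℝ) :
    ‖B * W‖ ≤ c * ‖W‖ := by
  have hN := trace_transpose_mul_mul_nonneg (Matrix.le_iff.mp h) W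
  rw [← neg_sub, Matrix.mul_neg, Matrix.neg_mul, trace_neg, ← sq_norm_mul_sub_smul_sq_norm,
    neg_nonneg, sub_nonpos, ← mul_pow] at hN
  exact (sq_le_sq₀ (norm_nonneg _) (by positivity)).mp hN

lemma isUnit_det_of_smul_one_le (hc : 0 < c) (h : c • 1 ≤ Bᵀ * B) : IsUnit (Bᵀ * B).det := by
  have hpd : (Bᵀ * B).PosDef := by
    simpa using (PosDef.one.smul hc).add_posSemidef (Matrix.le_iff.mp h)
  exact hpd.isUnit.map detMonoidHom

lemma dotProduct_mulVec_sub_smul_one (B : Matrix m k ℝ) (c : ℝ) (x : k → ℝ) :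
    x ⬝ᵥ ((Bᵀ * B - c • 1) *ᵥ x) = (B *ᵥ x) ⬝ᵥ (B *ᵥ x) - c * (x ⬝ᵥ x) := by
  rw [sub_mulVec, dotProduct_sub, ← mulVec_mulVec, dotProduct_mulVec, vecMul_transpose,
    smul_mulVec, one_mulVec, dotProduct_smul, smul_eq_mul, dotProduct_comm x]

lemma smul_one_le_transpose_mul_self (h : ∀ x, c * (x ⬝ᵥ x) ≤ (B *ᵥ x) ⬝ᵥ (B *ᵥ x)) :
    c • 1 ≤ Bᵀ * B := by
  refine Matrix.le_iff.mpr <| .of_dotProduct_mulVec_nonneg ?_ fun x => ?_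
  · simp [IsHermitian, conjTranspose_eq_transpose_of_trivial, transpose_mul]
  · simpa [dotProduct_mulVec_sub_smul_one] using h x

lemma transpose_mul_self_le_smul_one (h : ∀ x, (B *ᵥ x) ⬝ᵥ (B *ᵥ x) ≤ c * (x ⬝ᵥ x)) :
    Bᵀ * B ≤ c • 1 := by
  refine Matrix.le_iff.mpr <| .of_dotProduct_mulVec_nonneg ?_ fun x => ?_
  · simp [IsHermitian, conjTranspose_eq_transpose_of_trivial, transpose_mul]
  · rw [star_trivial, ← neg_sub, neg_mulVec, dotProduct_neg, dotProduct_mulVec_sub_smul_one]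
    linarith [h x]

end Gram

section SpecNorm

lemma sum_sq_eq_dotProduct_self (v : m → ℝ) : ∑ i, v i ^ 2 = v ⬝ᵥ v := by
  simp [dotProduct, sq]

lemma dotProduct_mulVec_self_le_sq_norm (A : Matrix m k ℝ) (x : k → ℝ) :
    (A *ᵥ x) ⬝ᵥ (A *ᵥ x) ≤ ‖A‖ ^ 2 * (x ⬝ᵥ x) := by
  rw [sq_norm_eq_sum, Finset.sum_mul]
  refine Finset.sum_le_sum fun i _ => ?_
  simpa [mulVec, dotProduct, sq] using Finset.sum_mul_sq_le_sq_mul_sq Finset.univ (A i) x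

lemma specNorm_nonneg (A : Matrix m k ℝ) : 0 ≤ specNorm A :=
  Real.sSup_nonneg fun _ ⟨_, _, hc⟩ => hc ▸ Real.sqrt_nonneg _

lemma sqrt_le_specNorm (A : Matrix m k ℝ) {y : k → ℝ} (hy : y ⬝ᵥ y = 1) :
    √((A *ᵥ y) ⬝ᵥ (A *ᵥ y)) ≤ specNorm A := by
  have hbdd : BddAbove {c | ∃ x : k → ℝ, ∑ j, x j ^ 2 = 1 ∧ c = √(∑ i, (A *ᵥ x) i ^ 2)} := by
    refine ⟨‖A‖, ?_⟩
    rintro _ ⟨z, hz, rfl⟩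
    rw [sum_sq_eq_dotProduct_self] at hz ⊢
    exact Real.sqrt_le_iff.mpr
      ⟨norm_nonneg _, by simpa [hz] using dotProduct_mulVec_self_le_sq_norm A z⟩
  rw [← sum_sq_eq_dotProduct_self]
  exact le_csSup hbdd ⟨y, (sum_sq_eq_dotProduct_self y).trans hy, rfl⟩

lemma dotProduct_mulVec_self_le_specNorm (A : Matrix m k ℝ) (x : k → ℝ) :
    (A *ᵥ x) ⬝ᵥ (A *ᵥ x) ≤ specNorm A ^ 2 * (x ⬝ᵥ x) := by
  rcases eq_or_ne (x ⬝ᵥ x) 0 with hx | hx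
  · simp [dotProduct_self_eq_zero.mp hx]
  have hpos : 0 < x ⬝ᵥ x := lt_of_le_of_ne (dotProduct_self_star_nonneg x) hx.symm
  set t := √(x ⬝ᵥ x)
  have ht : t ^ 2 = x ⬝ᵥ x := Real.sq_sqrt hpos.le
  have h := (Real.sqrt_le_left (specNorm_nonneg A)).mp <| sqrt_le_specNorm A (y := t⁻¹ • x) <| by
    rw [smul_dotProduct, dotProduct_smul, smul_eq_mul, smul_eq_mul, ← mul_assoc, ← sq, inv_pow, ht,
      inv_mul_cancel₀ hx]
  rw [mulVec_smul, smul_dotProduct, dotProduct_smul, smul_eq_mul, smul_eq_mul, ← mul_assoc, ← sq,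
    inv_pow, ht, inv_mul_le_iff₀ hpos] at h
  linarith

lemma norm_mul_le_specNorm_mul [DecidableEq k] (A : Matrix m k ℝ) (W : Matrix k l ℝ) :
    ‖A * W‖ ≤ specNorm A * ‖W‖ :=
  norm_mul_le_of_le_smul_one (specNorm_nonneg A)
    (transpose_mul_self_le_smul_one (dotProduct_mulVec_self_le_specNorm A)) W

end SpecNorm

section NearestOrthogonal

variable [DecidableEq k]

lemma norm_le_norm_mul_one_add {S : Matrix k k ℝ} (hS : S.PosSemidef) (X : Matrix m k ℝ) :
    ‖X‖ ≤ ‖X * (1 + S)‖ := by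
  have hSt : Sᵀ = S := by simpa [conjTranspose_eq_transpose_of_trivial] using hS.1.eq
  have hle : (1 : ℝ) • (1 : Matrix k k ℝ) ≤ (1 + S)ᵀ * (1 + S) := by
    have hSS : (S * S).PosSemidef := by
      simpa [conjTranspose_eq_transpose_of_trivial, hSt] using posSemidef_conjTranspose_mul_self S
    have h : (1 + S)ᵀ * (1 + S) - (1 : ℝ) • 1 = S + S + S * S := by
      simp only [transpose_add, transpose_one, hSt, Matrix.add_mul, Matrix.mul_add,
        Matrix.one_mul, Matrix.mul_one, one_smul]
      abel
    rw [Matrix.le_iff, h]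
    exact (hS.add hS).add hSS
  have h := le_sq_norm_mul_of_smul_one_le hle Xᵀ
  rw [one_mul, ← frobenius_norm_transpose ((1 + S) * Xᵀ), transpose_mul, transpose_transpose,
    transpose_add, transpose_one, hSt, frobenius_norm_transpose] at h
  exact (sq_le_sq₀ (norm_nonneg _) (norm_nonneg _)).mp h

/-- The witness is the polar factor `Q = S⁻¹R`, `S = (RRᵀ)^{1/2}`: `R - Q = (S - 1)Q` and, as
`S ⪰ 0`, `‖S - 1‖ ≤ ‖(S - 1)(S + 1)‖ = ‖RRᵀ - 1‖`. -/
lemma exists_orthogonal_of_isUnit_det {R : Matrix k k ℝ} (hR : IsUnit R.det) :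
    ∃ Q : Matrix k k ℝ, Qᵀ * Q = 1 ∧ ‖R - Q‖ ≤ ‖R * Rᵀ - 1‖ := by
  have hRR : (R * Rᵀ).PosSemidef := by
    simpa [conjTranspose_eq_transpose_of_trivial] using posSemidef_self_mul_conjTranspose R
  set S := CFC.sqrt (R * Rᵀ)
  have hSS : S * S = R * Rᵀ := CFC.sqrt_mul_sqrt_self _ hRR.nonneg
  have hS : S.PosSemidef := (CFC.sqrt_nonneg _).posSemidef
  have hSt : Sᵀ = S := by simpa [conjTranspose_eq_transpose_of_trivial] using hS.1.eq
  have hSdet : IsUnit S.det := isUnit_of_mul_isUnit_left <| by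
    rw [← det_mul, hSS, det_mul, det_transpose]
    exact hR.mul hR
  have hQ : S⁻¹ * R * (S⁻¹ * R)ᵀ = 1 := by
    calc S⁻¹ * R * (S⁻¹ * R)ᵀ = S⁻¹ * (R * Rᵀ) * S⁻¹ := by
          rw [transpose_mul, transpose_nonsing_inv, hSt]; simp only [Matrix.mul_assoc]
      _ = (S⁻¹ * S) * (S * S⁻¹) := by rw [← hSS]; simp only [Matrix.mul_assoc]
      _ = 1 := by rw [nonsing_inv_mul _ hSdet, mul_nonsing_inv _ hSdet, Matrix.one_mul]
  refine ⟨S⁻¹ * R, mul_eq_one_comm.mp hQ, ?_⟩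
  have hdecomp : R - S⁻¹ * R = (S - 1) * (S⁻¹ * R) := by
    rw [Matrix.sub_mul, Matrix.one_mul, ← Matrix.mul_assoc, mul_nonsing_inv _ hSdet,
      Matrix.one_mul]
  calc ‖R - S⁻¹ * R‖ = ‖S - 1‖ := by
        rw [hdecomp, norm_mul_of_transpose_mul_self_eq_one (mul_eq_one_comm.mp hQ)]
    _ ≤ ‖(S - 1) * (1 + S)‖ := norm_le_norm_mul_one_add hS _
    _ = ‖R * Rᵀ - 1‖ := by
        rw [← hSS, Matrix.sub_mul, Matrix.mul_add, Matrix.mul_add, Matrix.one_mul,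
          Matrix.mul_one, Matrix.one_mul]
        congr 1
        abel

lemma isCompact_setOf_transpose_mul_self_eq_one :
    IsCompact {Q : Matrix k k ℝ | Qᵀ * Q = 1} := by
  refine Metric.isCompact_of_isClosed_isBounded
    (isClosed_eq (continuous_id.matrix_transpose.matrix_mul continuous_id) continuous_const) ?_
  refine (Metric.isBounded_iff_subset_closedBall 0).mpr ⟨‖(1 : Matrix k k ℝ)‖, fun Q hQ => ?_⟩
  rw [mem_closedBall_zero_iff, ← norm_mul_of_transpose_mul_self_eq_one hQ 1, Matrix.one_mul]

lemma eventually_isUnit_det_add_smul_one (R : Matrix k k ℝ) :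
    ∀ᶠ δ in 𝓝[≠] (0 : ℝ), IsUnit (R + δ • 1).det := by
  have hroots := Polynomial.finite_setOfPred_isRoot (charpoly_monic (-R)).ne_zero
  filter_upwards [nhdsNE_le_cofinite 0 hroots.compl_mem_cofinite] with δ hδ
  have h := eval_charpoly (-R) δ
  rw [sub_neg_eq_add, scalar_apply, ← smul_one_eq_diagonal, add_comm] at h
  rw [isUnit_iff_ne_zero, ← h]
  exact hδ

/-- A nearest orthogonal matrix exists by compactness; it is compared with the polar factors of the
invertible perturbations `R + δ • 1`, `δ → 0`. -/
theorem exists_orthogonal_norm_sub_le (R : Matrix k k ℝ) :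
    ∃ Q : Matrix k k ℝ, Qᵀ * Q = 1 ∧ ‖R - Q‖ ≤ ‖R * Rᵀ - 1‖ := by
  obtain ⟨Q, hQ, hmin⟩ := isCompact_setOf_transpose_mul_self_eq_one.exists_isMinOn
    ⟨1, by simp⟩ (f := fun Q => ‖R - Q‖) (continuous_const.sub continuous_id).norm.continuousOn
  refine ⟨Q, hQ, ?_⟩
  let g : ℝ → ℝ := fun δ => ‖δ • (1 : Matrix k k ℝ)‖ + ‖(R + δ • 1) * (R + δ • 1)ᵀ - 1‖
  have hg : Tendsto g (𝓝[≠] 0) (𝓝 ‖R * Rᵀ - 1‖) := by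
    have hRδ : Continuous fun δ : ℝ => R + δ • (1 : Matrix k k ℝ) :=
      continuous_const.add (continuous_id.smul continuous_const)
    have : Continuous g := (continuous_id.smul continuous_const).norm.add
      ((hRδ.matrix_mul hRδ.matrix_transpose).sub continuous_const).norm
    have h0 : g 0 = ‖R * Rᵀ - 1‖ := by simp [g]
    exact h0 ▸ (this.tendsto 0).mono_left nhdsWithin_le_nhds
  refine ge_of_tendsto hg ?_
  filter_upwards [eventually_isUnit_det_add_smul_one R] with δ hδ
  obtain ⟨Q', hQ', hle⟩ := exists_orthogonal_of_isUnit_det hδ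
  calc ‖R - Q‖ ≤ ‖R - Q'‖ := hmin hQ'
    _ = ‖(R + δ • 1 - Q') - δ • 1‖ := by congr 1; abel
    _ ≤ ‖R + δ • 1 - Q'‖ + ‖δ • (1 : Matrix k k ℝ)‖ := norm_sub_le _ _
    _ ≤ g δ := by simp only [g]; linarith

end NearestOrthogonal

section Alignment

variable [DecidableEq k]

lemma norm_mul_transpose_le (Y : Matrix l k ℝ) (R : Matrix k k ℝ) :
    ‖Y * Rᵀ‖ ≤ (1 + ‖R * Rᵀ - 1‖) * ‖Y‖ := by
  have hYY : ‖Y * Yᵀ‖ ≤ ‖Y‖ ^ 2 :=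
    (frobenius_norm_mul Y Yᵀ).trans_eq (by rw [frobenius_norm_transpose, sq])
  have h := (abs_le.mp (abs_sq_norm_mul_transpose_sub_sq_norm_le Y R)).2
  have hx := norm_nonneg (R * Rᵀ - 1)
  refine (sq_le_sq₀ (norm_nonneg _) (by positivity)).mp ?_
  calc ‖Y * Rᵀ‖ ^ 2 ≤ ‖Y‖ ^ 2 + ‖Y‖ ^ 2 * ‖R * Rᵀ - 1‖ := by
        nlinarith [mul_le_mul_of_nonneg_right hYY hx]
    _ ≤ ((1 + ‖R * Rᵀ - 1‖) * ‖Y‖) ^ 2 := by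
        nlinarith [mul_nonneg hx (sq_nonneg ‖Y‖),
          mul_nonneg (sq_nonneg ‖R * Rᵀ - 1‖) (sq_nonneg ‖Y‖)]

lemma norm_sub_le_of_approx {R R' Q Q' : Matrix k k ℝ} {η : ℝ} (hQ' : Q'ᵀ * Q' = 1)
    (hR : ‖R * Rᵀ - 1‖ ≤ η) (hRR' : ‖R * R'ᵀ - 1‖ ≤ η) (hRQ : ‖R - Q‖ ≤ η)
    (hRQ' : ‖R' - Q'‖ ≤ η) : ‖Q - Q'‖ ≤ 3 * η + η ^ 2 := by
  have hη : 0 ≤ η := (norm_nonneg _).trans hR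
  have hQ't : Q'ᵀᵀ * Q'ᵀ = 1 := by rw [transpose_transpose]; exact mul_eq_one_comm.mp hQ'
  have h1 : ‖(Q - R) * Q'ᵀ‖ ≤ η := by
    rw [norm_mul_of_transpose_mul_self_eq_one hQ't, norm_sub_rev]; exact hRQ
  have h2 : ‖R * (Q' - R')ᵀ‖ ≤ (1 + η) * η := by
    rw [← frobenius_norm_transpose, transpose_mul, transpose_transpose]
    refine (norm_mul_transpose_le _ R).trans (mul_le_mul (by linarith) ?_ (norm_nonneg _)
      (by positivity))
    rwa [norm_sub_rev]
  have hdecomp : Q - Q' = ((Q - R) * Q'ᵀ + R * (Q' - R')ᵀ + (R * R'ᵀ - 1)) * Q' := by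
    simp only [Matrix.sub_mul, Matrix.mul_sub, transpose_sub, Matrix.add_mul, Matrix.mul_assoc, hQ',
      Matrix.mul_one, Matrix.one_mul]
    abel
  rw [hdecomp, norm_mul_of_transpose_mul_self_eq_one hQ']
  calc _ ≤ ‖(Q - R) * Q'ᵀ‖ + ‖R * (Q' - R')ᵀ‖ + ‖R * R'ᵀ - 1‖ := norm_add₃_le
    _ ≤ 3 * η + η ^ 2 := by nlinarith

end Alignment

section LeastSquares

def leastSquares [DecidableEq k] (B : Matrix m k ℝ) (A : Matrix m l ℝ) : Matrix k l ℝ :=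
  (Bᵀ * B)⁻¹ * Bᵀ * A

variable [DecidableEq k] {lam : ℝ} {B : Matrix m k ℝ} {B' : Matrix m' k ℝ}

lemma transpose_gram_inv (B : Matrix m k ℝ) : ((Bᵀ * B)⁻¹)ᵀ = (Bᵀ * B)⁻¹ := by
  rw [transpose_nonsing_inv, transpose_mul, transpose_transpose]

lemma norm_gram_inv_mul_le (hlam : 0 < lam) (hB : lam • 1 ≤ Bᵀ * B) (Y : Matrix m l ℝ) :
    ‖(Bᵀ * B)⁻¹ * Bᵀ * Y‖ ≤ ‖Y‖ / √lam := by
  have hG := isUnit_det_of_smul_one_le hlam hB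
  set W := (Bᵀ * B)⁻¹ * Bᵀ * Y
  have hGW : Bᵀ * B * W = Bᵀ * Y := by
    simp only [W, ← Matrix.mul_assoc, mul_nonsing_inv _ hG, Matrix.one_mul]
  have hBW : ‖B * W‖ ≤ ‖Y‖ := by
    have h : ‖B * W‖ ^ 2 ≤ ‖B * W‖ * ‖Y‖ := by
      calc ‖B * W‖ ^ 2 = ((B * W)ᵀ * Y).trace := by
            rw [sq_norm_eq_trace, transpose_mul, Matrix.mul_assoc, Matrix.mul_assoc,
              ← Matrix.mul_assoc Bᵀ, hGW]
        _ ≤ ‖B * W‖ * ‖Y‖ := (le_abs_self _).trans (abs_trace_transpose_mul_le _ _)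
    nlinarith [norm_nonneg (B * W), norm_nonneg Y]
  have hW := le_sq_norm_mul_of_smul_one_le hB W
  rw [le_div_iff₀ (Real.sqrt_pos.mpr hlam)]
  refine (sq_le_sq₀ (by positivity) (norm_nonneg _)).mp ?_
  rw [mul_pow, Real.sq_sqrt hlam.le]
  nlinarith [norm_nonneg (B * W)]

lemma norm_leastSquares_mul_transpose_sub_one_le (hlam : 0 < lam) (hB : lam • 1 ≤ Bᵀ * B)
    (hB' : lam • 1 ≤ B'ᵀ * B') (A : Matrix m l ℝ) (A' : Matrix m' l ℝ) :
    ‖leastSquares B A * (leastSquares B' A')ᵀ - 1‖ ≤ ‖A * A'ᵀ - B * B'ᵀ‖ / lam := by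
  have hG := isUnit_det_of_smul_one_le hlam hB
  have hG' := isUnit_det_of_smul_one_le hlam hB'
  set D := A * A'ᵀ - B * B'ᵀ
  have h : leastSquares B A * (leastSquares B' A')ᵀ - 1 =
      (Bᵀ * B)⁻¹ * Bᵀ * (((B'ᵀ * B')⁻¹ * B'ᵀ * Dᵀ)ᵀ) := by
    have h1 : (1 : Matrix k k ℝ) = (Bᵀ * B)⁻¹ * (Bᵀ * B) * ((B'ᵀ * B') * (B'ᵀ * B')⁻¹) := by
      rw [nonsing_inv_mul _ hG, mul_nonsing_inv _ hG', Matrix.one_mul]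
    rw [h1]
    simp only [leastSquares, D, transpose_mul, transpose_transpose, transpose_gram_inv,
      transpose_sub, Matrix.mul_sub, Matrix.mul_assoc]
  have hlam' : √lam * √lam = lam := Real.mul_self_sqrt hlam.le
  rw [h]
  calc _ ≤ ‖((B'ᵀ * B')⁻¹ * B'ᵀ * Dᵀ)ᵀ‖ / √lam := norm_gram_inv_mul_le hlam hB _
    _ ≤ ‖Dᵀ‖ / √lam / √lam := by
        rw [frobenius_norm_transpose]
        gcongr
        exact norm_gram_inv_mul_le hlam hB' _
    _ = ‖D‖ / lam := by rw [frobenius_norm_transpose, div_div, hlam']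

def colSpaceProj (B : Matrix m k ℝ) : Matrix m m ℝ := B * (Bᵀ * B)⁻¹ * Bᵀ

lemma colSpaceProj_mul (hG : IsUnit (Bᵀ * B).det) : colSpaceProj B * B = B := by
  simp only [colSpaceProj, Matrix.mul_assoc, nonsing_inv_mul _ hG, Matrix.mul_one]

lemma isStarProjection_colSpaceProj [DecidableEq m] (hG : IsUnit (Bᵀ * B).det) :
    IsStarProjection (colSpaceProj B) := by
  refine ⟨?_, ?_⟩
  · rw [IsIdempotentElem]
    nth_rw 2 [colSpaceProj]
    rw [← Matrix.mul_assoc, ← Matrix.mul_assoc, colSpaceProj_mul hG, colSpaceProj]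
  · simp only [IsSelfAdjoint, star_eq_conjTranspose, conjTranspose_eq_transpose_of_trivial,
      colSpaceProj, transpose_mul, transpose_transpose, transpose_gram_inv, Matrix.mul_assoc]

lemma mul_leastSquares (B : Matrix m k ℝ) (A : Matrix m k ℝ) :
    B * leastSquares B A = colSpaceProj B * A := by
  simp only [leastSquares, colSpaceProj, Matrix.mul_assoc]

/-- With `P` the projection onto the column space of `B` and `D = AAᵀ - BBᵀ`, the residual
`E = A - BR = (1 - P)A` has `EEᵀ = (1 - P)D(1 - P)` and `E(BR)ᵀ = (1 - P)DP`: the first controls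
`‖E‖² - ‖ERᵀ‖²`, the second `‖ERᵀ‖` through `BᵀB ⪰ λ`. -/
lemma sq_norm_sub_mul_leastSquares_le [DecidableEq m] (hlam : 0 < lam) (hB : lam • 1 ≤ Bᵀ * B)
    (A : Matrix m k ℝ) :
    ‖A - B * leastSquares B A‖ ^ 2 ≤ 2 * ‖A * Aᵀ - B * Bᵀ‖ ^ 2 / lam := by
  have hG := isUnit_det_of_smul_one_le hlam hB
  set R := leastSquares B A
  set D := A * Aᵀ - B * Bᵀ
  set P := colSpaceProj B
  have hP : IsStarProjection P := isStarProjection_colSpaceProj hG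
  have hPB : (1 - P) * B = 0 := by
    rw [Matrix.sub_mul, colSpaceProj_mul hG, Matrix.one_mul, sub_self]
  have hE : A - B * R = (1 - P) * A := by rw [mul_leastSquares, Matrix.sub_mul, Matrix.one_mul]
  have hEE : ‖(A - B * R) * (A - B * R)ᵀ‖ ≤ ‖D‖ := by
    have : (A - B * R) * (A - B * R)ᵀ = (1 - P) * D * (1 - P) := by
      rw [hE, transpose_mul, transpose_eq_of_isStarProjection hP.one_sub]
      simp only [D, Matrix.mul_sub, Matrix.sub_mul, ← Matrix.mul_assoc, hPB, Matrix.zero_mul,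
        sub_zero]
    rw [this]
    exact (norm_mul_proj_le hP.one_sub _).trans (norm_proj_mul_le hP.one_sub _)
  have hEBR : ‖(A - B * R) * (B * R)ᵀ‖ ≤ ‖D‖ := by
    have : (A - B * R) * (B * R)ᵀ = (1 - P) * D * P := by
      rw [hE, mul_leastSquares, transpose_mul, transpose_eq_of_isStarProjection hP]
      simp only [D, Matrix.mul_sub, Matrix.sub_mul, ← Matrix.mul_assoc, hPB, Matrix.zero_mul,
        sub_zero]
    rw [this]
    exact (norm_mul_proj_le hP _).trans (norm_proj_mul_le hP.one_sub _)
  have hER : lam * ‖(A - B * R) * Rᵀ‖ ^ 2 ≤ ‖D‖ ^ 2 := by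
    have h := le_sq_norm_mul_of_smul_one_le hB ((A - B * R) * Rᵀ)ᵀ
    rw [frobenius_norm_transpose, ← frobenius_norm_transpose (B * _), transpose_mul,
      transpose_transpose, Matrix.mul_assoc, ← transpose_mul] at h
    nlinarith [pow_le_pow_left₀ (norm_nonneg _) hEBR 2]
  have hRR : ‖R * Rᵀ - 1‖ ≤ ‖D‖ / lam := norm_leastSquares_mul_transpose_sub_one_le hlam hB hB A A
  have habs := (abs_le.mp (abs_sq_norm_mul_transpose_sub_sq_norm_le (A - B * R) R)).1
  have hprod : ‖(A - B * R) * (A - B * R)ᵀ‖ * ‖R * Rᵀ - 1‖ ≤ ‖D‖ * (‖D‖ / lam) :=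
    mul_le_mul hEE hRR (norm_nonneg _) (norm_nonneg _)
  rw [mul_div_assoc', ← sq] at hprod
  rw [le_div_iff₀ hlam] at hprod ⊢
  nlinarith

end LeastSquares

theorem exists_orthogonal_norm_sub_mul_le [DecidableEq m] [DecidableEq k] {lam S ε : ℝ}
    {B : Matrix m k ℝ} (hlam : 0 < lam) (hB : lam • 1 ≤ Bᵀ * B) (hS0 : 0 ≤ S)
    (hS : ∀ W : Matrix k k ℝ, ‖B * W‖ ≤ S * ‖W‖) {A : Matrix m k ℝ}
    (hA : ‖A * Aᵀ - B * Bᵀ‖ ≤ ε) :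
    ∃ Q : Matrix k k ℝ, Qᵀ * Q = 1 ∧ ‖leastSquares B A - Q‖ ≤ ε / lam ∧
      ‖A - B * Q‖ ≤ √(2 / lam) * ε + S * (ε / lam) := by
  have hε : 0 ≤ ε := (norm_nonneg _).trans hA
  obtain ⟨Q, hQ, hRQ⟩ := exists_orthogonal_norm_sub_le (leastSquares B A)
  have hRQ' : ‖leastSquares B A - Q‖ ≤ ε / lam :=
    hRQ.trans ((norm_leastSquares_mul_transpose_sub_one_le hlam hB hB A A).trans (by gcongr))
  refine ⟨Q, hQ, hRQ', ?_⟩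
  have hE : ‖A - B * leastSquares B A‖ ≤ √(2 / lam) * ε := by
    refine (sq_le_sq₀ (norm_nonneg _) (by positivity)).mp ?_
    rw [mul_pow, Real.sq_sqrt (by positivity)]
    calc _ ≤ 2 * ‖A * Aᵀ - B * Bᵀ‖ ^ 2 / lam := sq_norm_sub_mul_leastSquares_le hlam hB A
      _ ≤ 2 * ε ^ 2 / lam := by gcongr
      _ = 2 / lam * ε ^ 2 := by ring
  calc ‖A - B * Q‖ = ‖(A - B * leastSquares B A) + B * (leastSquares B A - Q)‖ := by
        rw [Matrix.mul_sub, sub_add_sub_cancel]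
    _ ≤ _ := norm_add_le _ _
    _ ≤ √(2 / lam) * ε + S * (ε / lam) := add_le_add hE ((hS _).trans (by gcongr))

lemma sq_norm_le_sum_sq_norm_submatrix {κ : Type*} [Fintype κ] {I : κ → Finset m}
    (hI : ∀ i, ∃ a, i ∈ I a) (X : Matrix m k ℝ) :
    ‖X‖ ^ 2 ≤ ∑ a, ‖X.submatrix ((↑) : I a → m) id‖ ^ 2 := by
  simp only [sq_norm_eq_sum, submatrix_apply, id,
    Finset.sum_coe_sort (I _) (fun i => ∑ j, X i j ^ 2)]
  have hrow : ∀ i, 0 ≤ ∑ j, X i j ^ 2 := fun i => Finset.sum_nonneg fun _ _ => sq_nonneg _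
  calc ∑ i, ∑ j, X i j ^ 2 ≤ ∑ i, ∑ a, if i ∈ I a then ∑ j, X i j ^ 2 else 0 := by
        refine Finset.sum_le_sum fun i _ => ?_
        obtain ⟨a, ha⟩ := hI i
        refine (if_pos ha).symm.le.trans (Finset.single_le_sum
          (f := fun a => if i ∈ I a then ∑ j, X i j ^ 2 else 0) (fun b _ => ?_) (Finset.mem_univ a))
        split_ifs <;> simp [hrow]
    _ = ∑ a, ∑ i ∈ I a, ∑ j, X i j ^ 2 := by
        rw [Finset.sum_comm]
        simp [Finset.sum_ite_mem]

lemma norm_le_sqrt_card_mul_of_norm_submatrix_le {κ : Type*} [Fintype κ] {I : κ → Finset m}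
    (hI : ∀ i, ∃ a, i ∈ I a) {X : Matrix m k ℝ} {β : ℝ} (hβ : 0 ≤ β)
    (h : ∀ a, ‖X.submatrix ((↑) : I a → m) id‖ ≤ β) : ‖X‖ ≤ √(Fintype.card κ) * β := by
  refine (sq_le_sq₀ (norm_nonneg _) (by positivity)).mp ?_
  calc ‖X‖ ^ 2 ≤ ∑ a, ‖X.submatrix ((↑) : I a → m) id‖ ^ 2 := sq_norm_le_sum_sq_norm_submatrix hI X
    _ ≤ ∑ _a : κ, β ^ 2 := Finset.sum_le_sum fun a _ => pow_le_pow_left₀ (norm_nonneg _) (h a) 2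
    _ = (√(Fintype.card κ) * β) ^ 2 := by
        rw [Finset.sum_const, Finset.card_univ, nsmul_eq_mul, mul_pow, Real.sq_sqrt (by positivity)]

theorem exists_orthogonal_of_blocks [DecidableEq k] {κ : Type*} [Fintype κ] [Nonempty κ]
    {G : SimpleGraph κ} (hG : ∀ a b, G.Reachable a b) {I : κ → Finset m}
    (hI : ∀ i, ∃ a, i ∈ I a) {U Ustar : Matrix m k ℝ} {lam S ε : ℝ} (hlam : 0 < lam)
    (hS0 : 0 ≤ S) (hS : ∀ W : Matrix k k ℝ, ‖Ustar * W‖ ≤ S * ‖W‖)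
    (hlow : ∀ a, lam • (1 : Matrix k k ℝ) ≤
      (Ustar.submatrix ((↑) : I a → m) id)ᵀ * Ustar.submatrix ((↑) : I a → m) id)
    (hblock : ∀ a b, (a = b ∨ G.Adj a b) →
      ‖(U * Uᵀ - Ustar * Ustarᵀ).submatrix ((↑) : I a → m) ((↑) : I b → m)‖ ≤ ε) :
    ∃ Q : Matrix k k ℝ, Qᵀ * Q = 1 ∧ ‖U - Ustar * Q‖ ≤ √(Fintype.card κ) *
      (√(2 / lam) * ε + S * (ε / lam) +
        S * (Fintype.card κ * (3 * (ε / lam) + (ε / lam) ^ 2))) := by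
  classical
  let A a := U.submatrix ((↑) : I a → m) id
  let B a := Ustar.submatrix ((↑) : I a → m) id
  have hAB : ∀ a b, (a = b ∨ G.Adj a b) → ‖A a * (A b)ᵀ - B a * (B b)ᵀ‖ ≤ ε := fun a b h => by
    have h' := hblock a b h
    rwa [submatrix_sub, Pi.sub_apply, Pi.sub_apply, submatrix_mul_transpose,
      submatrix_mul_transpose] at h'
  have hBS : ∀ a (W : Matrix k k ℝ), ‖B a * W‖ ≤ S * ‖W‖ := fun a W => by
    rw [← submatrix_mul_id]
    exact (norm_submatrix_le _ Subtype.val_injective Function.injective_id).trans (hS W)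
  have hε : 0 ≤ ε := (norm_nonneg _).trans (hAB (Classical.arbitrary κ) _ (Or.inl rfl))
  choose Q hQ hRQ hAQ using fun a =>
    exists_orthogonal_norm_sub_mul_le hlam (hlow a) hS0 (hBS a) (hAB a a (Or.inl rfl))
  have hcross : ∀ a b, (a = b ∨ G.Adj a b) →
      ‖leastSquares (B a) (A a) * (leastSquares (B b) (A b))ᵀ - 1‖ ≤ ε / lam := fun a b h =>
    (norm_leastSquares_mul_transpose_sub_one_le hlam (hlow a) (hlow b) _ _).trans
      (div_le_div_of_nonneg_right (hAB a b h) hlam.le)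
  have hadj : ∀ a b, G.Adj a b → ‖Q a - Q b‖ ≤ 3 * (ε / lam) + (ε / lam) ^ 2 := fun a b h =>
    norm_sub_le_of_approx (hQ b) (hcross a a (Or.inl rfl)) (hcross a b (Or.inr h)) (hRQ a) (hRQ b)
  let a₀ := Classical.arbitrary κ
  refine ⟨Q a₀, hQ a₀, norm_le_sqrt_card_mul_of_norm_submatrix_le hI (by positivity) fun a => ?_⟩
  have hQa : ‖Q a - Q a₀‖ ≤ Fintype.card κ * (3 * (ε / lam) + (ε / lam) ^ 2) :=
    (hG a a₀).norm_sub_le_card_mul (by positivity) hadj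
  calc ‖(U - Ustar * Q a₀).submatrix ((↑) : I a → m) id‖
        = ‖(A a - B a * Q a) + B a * (Q a - Q a₀)‖ := by
        rw [submatrix_sub, Pi.sub_apply, Pi.sub_apply, submatrix_mul_id, Matrix.mul_sub,
          sub_add_sub_cancel]
    _ ≤ ‖A a - B a * Q a‖ + ‖B a * (Q a - Q a₀)‖ := norm_add_le _ _
    _ ≤ _ := add_le_add (hAQ a) ((hBS a _).trans (mul_le_mul_of_nonneg_left hQa hS0))

lemma norm_mask_le (Ω : Set (m × m)) (X : Matrix m m ℝ) : ‖mask Ω X‖ ≤ ‖X‖ := by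
  refine (sq_le_sq₀ (norm_nonneg _) (norm_nonneg _)).mp ?_
  simp only [sq_norm_eq_sum, mask, of_apply]
  refine Finset.sum_le_sum fun i _ => Finset.sum_le_sum fun j _ => ?_
  split_ifs <;> simp [sq_nonneg]

lemma norm_submatrix_sub_le_of_forall_mem {Ω : Set (m × m)} {f : m' → m} {g : k' → m}
    (hf : f.Injective) (hg : g.Injective) (hΩ : ∀ a b, (f a, g b) ∈ Ω) (X Y Δ : Matrix m m ℝ) :
    ‖(X - Y).submatrix f g‖ ≤ ‖mask Ω (X - (Y + Δ))‖ + ‖Δ‖ := by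
  have h : (X - Y).submatrix f g = (mask Ω (X - (Y + Δ))).submatrix f g + Δ.submatrix f g := by
    ext a b
    simp [mask, hΩ a b]
    ring
  rw [h]
  exact (norm_add_le _ _).trans (add_le_add (norm_submatrix_le _ hf hg) (norm_submatrix_le _ hf hg))

lemma norm_mask_sub_le_of_isMin {n r : ℕ} {Ω : Set (Fin n × Fin n)} {M : Matrix (Fin n) (Fin n) ℝ}
    {U : Matrix (Fin n) (Fin r) ℝ} (hU : ∀ W : Matrix (Fin n) (Fin r) ℝ, objF Ω M U ≤ objF Ω M W)
    (W : Matrix (Fin n) (Fin r) ℝ) : ‖mask Ω (U * Uᵀ - M)‖ ≤ ‖mask Ω (W * Wᵀ - M)‖ := by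
  have h := hU W
  simp only [objF, frobNorm_eq_norm] at h
  exact (sq_le_sq₀ (norm_nonneg _) (norm_nonneg _)).mp (by linarith)

lemma norm_submatrix_sub_le_of_isMin {n r : ℕ} {Ω : Set (Fin n × Fin n)}
    {U Ustar : Matrix (Fin n) (Fin r) ℝ} {Δ : Matrix (Fin n) (Fin n) ℝ}
    (hU : ∀ W : Matrix (Fin n) (Fin r) ℝ,
      objF Ω (Ustar * Ustarᵀ + Δ) U ≤ objF Ω (Ustar * Ustarᵀ + Δ) W)
    {s t : Finset (Fin n)} (hst : ∀ i ∈ s, ∀ j ∈ t, (i, j) ∈ Ω) :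
    ‖(U * Uᵀ - Ustar * Ustarᵀ).submatrix ((↑) : s → Fin n) ((↑) : t → Fin n)‖ ≤ 2 * ‖Δ‖ := by
  have hres : ‖mask Ω (U * Uᵀ - (Ustar * Ustarᵀ + Δ))‖ ≤ ‖Δ‖ :=
    (norm_mask_sub_le_of_isMin hU Ustar).trans (by simpa using norm_mask_le Ω (-Δ))
  refine (norm_submatrix_sub_le_of_forall_mem Subtype.val_injective Subtype.val_injective
    (fun i j => hst i i.2 j j.2) _ _ Δ).trans ?_
  linarith

lemma smul_one_le_transpose_mul_submatrix {n r : ℕ} {U : Matrix (Fin n) (Fin r) ℝ}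
    {s : Finset (Fin n)} {lam : ℝ}
    (h : ∀ x : Fin r → ℝ, lam * ∑ j, x j ^ 2 ≤ ∑ i ∈ s, (∑ j, U i j * x j) ^ 2) :
    lam • 1 ≤ (U.submatrix ((↑) : s → Fin n) id)ᵀ * U.submatrix ((↑) : s → Fin n) id := by
  refine smul_one_le_transpose_mul_self fun x => ?_
  simp only [dotProduct, mulVec, submatrix_apply, id, ← sq]
  rw [Finset.sum_coe_sort s fun i => (∑ j, U i j * x j) ^ 2]
  exact h x

lemma le_cZero_div_mul {n r : ℕ} (K : ℕ) {lam : ℝ} (hlam : 0 < lam)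
    (Ustar : Matrix (Fin n) (Fin r) ℝ) (Δ : Matrix (Fin n) (Fin n) ℝ) :
    √K * (√(2 / lam) * (2 * ‖Δ‖) + specNorm Ustar * (2 * ‖Δ‖ / lam) +
        specNorm Ustar * (K * (3 * (2 * ‖Δ‖ / lam) + (2 * ‖Δ‖ / lam) ^ 2))) ≤
      cZero K lam Ustar Δ / lam * ‖Δ‖ := by
  have hd := norm_nonneg Δ
  have hS := specNorm_nonneg Ustar
  rw [cZero, frobNorm_eq_norm]
  generalize ‖Δ‖ = d at hd ⊢
  generalize specNorm Ustar = S at hS ⊢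
  obtain ⟨s, hs, rfl⟩ : ∃ s, 0 < s ∧ lam = s ^ 2 :=
    ⟨√lam, Real.sqrt_pos.mpr hlam, (Real.sq_sqrt hlam.le).symm⟩
  have h8 : √(8 * (K : ℝ)) = 2 * √2 * √K := by
    rw [Real.sqrt_mul (by norm_num), show (8 : ℝ) = 2 ^ 2 * 2 by norm_num,
      Real.sqrt_mul (by norm_num), Real.sqrt_sq (by norm_num)]
  have ht : 2 ≤ 2 * √2 := by linarith [Real.one_le_sqrt.mpr (by norm_num : (1 : ℝ) ≤ 2)]
  rw [h8, Real.sqrt_div' 2 (sq_nonneg s), Real.sqrt_sq hs.le, ← sub_nonneg]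
  have key : 2 * √2 * √K * (s + 2 * √d + S + K * S * (3 + (2 / s ^ 2) * d)) / s ^ 2 * d
      - √K * (√2 / s * (2 * d) + S * (2 * d / s ^ 2) +
        S * (K * (3 * (2 * d / s ^ 2) + (2 * d / s ^ 2) ^ 2)))
      = √K * d / s ^ 2 * (4 * √2 * √d + (2 * √2 - 2) * (S + K * S * (3 + 2 * d / s ^ 2))) := by
    field_simp
    ring
  rw [key]
  have : 0 ≤ 2 * √2 - 2 := by linarith
  positivity

end ReluSampling

open ReluSampling in
theorem statement11_general {n r : ℕ}
    (Ustar : Matrix (Fin n) (Fin r) ℝ) (Δ : Matrix (Fin n) (Fin n) ℝ)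
    (K : ℕ) (hK : 0 < K) (I : Fin K → Finset (Fin n)) (lam : ℝ) (hlam : 0 < lam)
    (hA3 : Assumption3 Ustar (reluSet (Ustar * Ustarᵀ + Δ)) K I lam)
    (U : Matrix (Fin n) (Fin r) ℝ)
    (hopt : ∀ W : Matrix (Fin n) (Fin r) ℝ,
      objF (reluSet (Ustar * Ustarᵀ + Δ)) (Ustar * Ustarᵀ + Δ) U ≤
        objF (reluSet (Ustar * Ustarᵀ + Δ)) (Ustar * Ustarᵀ + Δ) W) :
    ∃ Q : Matrix (Fin r) (Fin r) ℝ, Qᵀ * Q = 1 ∧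
      frobNorm (U - Ustar * Q) ≤ (cZero K lam Ustar Δ / lam) * frobNorm Δ := by
  obtain ⟨hcover, hdiag, hlow, hpath⟩ := hA3
  let observed : Fin K → Fin K → Prop := fun a b =>
    ∀ i ∈ I a, ∀ j ∈ I b, (i, j) ∈ reluSet (Ustar * Ustarᵀ + Δ)
  have hreach : ∀ a b, (SimpleGraph.fromRel observed).Reachable a b := fun a b => by
    rcases eq_or_ne a b with rfl | hab
    · rfl
    obtain ⟨s, p, rfl, rfl, hp⟩ := hpath a b hab
    exact SimpleGraph.reachable_fromRel_of_chain p hp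
  have hsymm : (U * Uᵀ - Ustar * Ustarᵀ)ᵀ = U * Uᵀ - Ustar * Ustarᵀ := by
    simp [transpose_sub, transpose_mul]
  have : Nonempty (Fin K) := ⟨⟨0, hK⟩⟩
  obtain ⟨Q, hQ, hbound⟩ := exists_orthogonal_of_blocks hreach hcover hlam
    (specNorm_nonneg Ustar) (norm_mul_le_specNorm_mul Ustar)
    (fun a => smul_one_le_transpose_mul_submatrix (hlow a)) (ε := 2 * ‖Δ‖) fun a b h => by
      obtain rfl | ⟨-, h | h⟩ := h.imp_right (SimpleGraph.fromRel_adj _ _ _).mp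
      · exact norm_submatrix_sub_le_of_isMin hopt (hdiag a)
      · exact norm_submatrix_sub_le_of_isMin hopt h
      · exact (norm_submatrix_comm hsymm _ _).trans_le (norm_submatrix_sub_le_of_isMin hopt h)
  rw [Fintype.card_fin] at hbound
  refine ⟨Q, hQ, ?_⟩
  rw [frobNorm_eq_norm, frobNorm_eq_norm]
  exact hbound.trans (le_cZero_div_mul K hlam Ustar Δ)

/-- under Assumption 3, every global minimizer `U` of `F` satisfies
`‖U − U* Q‖_F ≤ (c₀/λ)‖Δ‖_F` for some orthogonal `Q`. -/
theorem statement11 {n r : ℕ} (hn : 0 < n) (hr : 0 < r) (hrn : r ≤ n)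
    (Ustar : Matrix (Fin n) (Fin r) ℝ) (Δ : Matrix (Fin n) (Fin n) ℝ)
    (K : ℕ) (hK : 0 < K) (I : Fin K → Finset (Fin n)) (lam : ℝ) (hlam : 0 < lam)
    (hA3 : Assumption3 Ustar (reluSet (Ustar * Ustarᵀ + Δ)) K I lam)
    (U : Matrix (Fin n) (Fin r) ℝ)
    (hopt : ∀ W : Matrix (Fin n) (Fin r) ℝ,
      objF (reluSet (Ustar * Ustarᵀ + Δ)) (Ustar * Ustarᵀ + Δ) U ≤
        objF (reluSet (Ustar * Ustarᵀ + Δ)) (Ustar * Ustarᵀ + Δ) W) :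
    ∃ Q : Matrix (Fin r) (Fin r) ℝ, Qᵀ * Q = 1 ∧
      frobNorm (U - Ustar * Q) ≤ (cZero K lam Ustar Δ / lam) * frobNorm Δ :=
  statement11_general Ustar Δ K hK I lam hlam hA3 U hopt
end
end
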